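/- Let k ≥ 3 and r ≥ 2 be integers, let s be an integer with 2 ≤ s ≤ r, and let λ ∈ ℝ be a root of R^k_s. Then λ is an eigenvalue of the adjacency matrix of \widehat{X_r^k} and the λ-eigenspace of A(\widehat{X_r^k}) has dimension at least (k−2)·k·(k−1)^{r−s}. -/

import Mathlib

open Polynomial

/-- Vertices of the rooted tree of depth `r` in which each vertex at depth `i < r`
has `b i` children: a vertex is a word assigning to each position `i < m ≤ r`
a letter in `Fin (b i)`; the empty word (`m = 0`) is the root, and the depth of a
vertex is its length `m`. -/
abbrev BVertex (b : ℕ → ℕ) (r : ℕ) := Σ m : Fin (r + 1), (i : Fin (m : ℕ)) → Fin (b i)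

/-- `y` is a child of `x`: the word `y` extends the word `x` by one letter. -/
def BExt {b : ℕ → ℕ} {r : ℕ} (x y : BVertex b r) : Prop :=
  ∃ h : (y.1 : ℕ) = (x.1 : ℕ) + 1,
    ∀ i : Fin (x.1 : ℕ), y.2 ⟨(i : ℕ), by have := i.isLt; omega⟩ = x.2 i

/-- Adjacency in the rooted tree: the parent/child relation. -/
def BAdj {b : ℕ → ℕ} {r : ℕ} (x y : BVertex b r) : Prop := BExt x y ∨ BExt y x

open Classical in
/-- Adjacency matrix of the rooted tree with branching sequence `b` and depth `r`. -/
noncomputable def BAdjMatrix (b : ℕ → ℕ) (r : ℕ) : Matrix (BVertex b r) (BVertex b r) ℝ :=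
  fun x y => if BAdj x y then 1 else 0

/-- `lam` is an eigenvalue of the adjacency matrix of the tree. -/
def IsAdjEigenvalue (b : ℕ → ℕ) (r : ℕ) (lam : ℝ) : Prop :=
  ∃ v : BVertex b r → ℝ, v ≠ 0 ∧ (BAdjMatrix b r).mulVec v = lam • v

/-- Dimension of the `lam`-eigenspace of the adjacency matrix of the tree. -/
noncomputable def adjEigDim (b : ℕ → ℕ) (r : ℕ) (lam : ℝ) : ℕ :=
  Module.finrank ℝ
    (LinearMap.ker ((BAdjMatrix b r).mulVecLin - lam • LinearMap.id))

/-- Branching sequence of the tree `\widehat{X_r^k}`: the root has `k` children and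
every other non-leaf vertex has `k − 1` children. -/
def hatB (k : ℕ) : ℕ → ℕ := fun i => if i = 0 then k else k - 1

/-- The polynomials `R^k_n`: `R^k_0 = 0`, `R^k_1 = 1`,
`R^k_n = x·R^k_{n-1} − (k−1)·R^k_{n-2}`. -/
noncomputable def Rpoly (k : ℕ) : ℕ → Polynomial ℝ
  | 0 => 0
  | 1 => 1
  | n + 2 => X * Rpoly k (n + 1) - C ((k : ℝ) - 1) * Rpoly k n

/-- The polynomials `Q^k_n = x·R^k_n − k·R^k_{n-1}`. -/
noncomputable def Qpoly (k : ℕ) (n : ℕ) : Polynomial ℝ :=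
  X * Rpoly k n - C (k : ℝ) * Rpoly k (n - 1)

section HatAux

variable {b : ℕ → ℕ} {r : ℕ}

lemma bv_ext {x y : BVertex b r} (h1 : (x.1 : ℕ) = (y.1 : ℕ))
    (h2 : ∀ (i : ℕ) (hx : i < (x.1 : ℕ)) (hy : i < (y.1 : ℕ)), x.2 ⟨i, hx⟩ = y.2 ⟨i, hy⟩) :
    x = y := by
  obtain ⟨⟨m1, hm1⟩, f1⟩ := x
  obtain ⟨⟨m2, hm2⟩, f2⟩ := y
  change m1 = m2 at h1
  subst h1
  exact Sigma.ext rfl (heq_of_eq (funext fun i => h2 i i.isLt i.isLt))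

/-- The parent of a vertex (the root is its own parent). -/
def parentV (x : BVertex b r) : BVertex b r :=
  ⟨⟨(x.1 : ℕ) - 1, by have := x.1.isLt; omega⟩,
    fun i => x.2 ⟨i, by have : (i : ℕ) < (x.1 : ℕ) - 1 := i.isLt; omega⟩⟩

@[simp] lemma parentV_fst (x : BVertex b r) : ((parentV x).1 : ℕ) = (x.1 : ℕ) - 1 := rfl

lemma parentV_snd (x : BVertex b r) (i : ℕ) (hi : i < (x.1:ℕ) - 1) (hi' : i < (x.1:ℕ)) :
    (parentV x).2 ⟨i, hi⟩ = x.2 ⟨i, hi'⟩ := rfl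

/-- The `j`-th child of a vertex. -/
def childV (x : BVertex b r) (h : (x.1 : ℕ) < r) (j : Fin (b (x.1 : ℕ))) : BVertex b r :=
  ⟨⟨(x.1 : ℕ) + 1, by omega⟩,
    fun i =>
      if hi : (i : ℕ) < (x.1 : ℕ) then x.2 ⟨i, hi⟩
      else Fin.cast (congrArg b
        (by have : (i : ℕ) < (x.1 : ℕ) + 1 := i.isLt; omega : (x.1 : ℕ) = (i : ℕ))) j⟩

@[simp] lemma childV_fst (x : BVertex b r) (h : (x.1:ℕ) < r) (j) :
    ((childV x h j).1 : ℕ) = (x.1 : ℕ) + 1 := rfl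

lemma childV_snd_lt (x : BVertex b r) (h : (x.1:ℕ) < r) (j) (i : ℕ)
    (hi : i < (x.1:ℕ) + 1) (hi' : i < (x.1:ℕ)) :
    (childV x h j).2 ⟨i, hi⟩ = x.2 ⟨i, hi'⟩ := by
  simp [childV, hi']

lemma childV_snd_last (x : BVertex b r) (h : (x.1:ℕ) < r) (j)
    (hi : (x.1:ℕ) < (x.1:ℕ) + 1) :
    (childV x h j).2 ⟨(x.1:ℕ), hi⟩ = j := by
  simp [childV]

lemma bext_iff_child {x y : BVertex b r} :
    BExt x y ↔ ∃ (h : (x.1 : ℕ) < r) (j : Fin (b (x.1 : ℕ))), y = childV x h j := by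
  constructor
  · rintro ⟨hlen, hco⟩
    have hxr : (x.1 : ℕ) < r := by have := y.1.isLt; omega
    have hlt : (x.1 : ℕ) < (y.1 : ℕ) := by omega
    refine ⟨hxr, y.2 ⟨(x.1 : ℕ), hlt⟩, ?_⟩
    refine bv_ext (by simp [hlen]) ?_
    intro i hy hc
    have hc' : i < (x.1 : ℕ) + 1 := by simpa using hc
    rcases Nat.lt_or_ge i (x.1 : ℕ) with hi | hi
    · rw [childV_snd_lt x hxr _ i hc' hi]
      exact hco ⟨i, hi⟩
    · have hieq : i = (x.1 : ℕ) := by omega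
      subst hieq
      exact (childV_snd_last x hxr (y.2 ⟨(x.1 : ℕ), hlt⟩) hc).symm
  · rintro ⟨h, j, rfl⟩
    refine ⟨rfl, fun i => ?_⟩
    exact childV_snd_lt x h j i (by omega) i.isLt

lemma bext_iff_parent {x y : BVertex b r} :
    BExt x y ↔ 0 < (y.1 : ℕ) ∧ x = parentV y := by
  constructor
  · rintro ⟨hlen, hco⟩
    have h0 : 0 < (y.1 : ℕ) := by omega
    refine ⟨h0, bv_ext (by simp [hlen]) ?_⟩
    intro i hx hp
    have hi' : i < (x.1 : ℕ) := hx
    rw [parentV_snd y i hp (by omega)]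
    exact (hco ⟨i, hi'⟩).symm
  · rintro ⟨h0, rfl⟩
    refine ⟨by simp; omega, fun i => ?_⟩
    have hi : (i : ℕ) < (y.1 : ℕ) - 1 := i.isLt
    exact (parentV_snd y i hi (by omega)).symm

lemma childV_injective (x : BVertex b r) (h : (x.1:ℕ) < r) :
    Function.Injective (childV x h) := by
  intro j1 j2 he
  unfold childV at he
  injection he with h1 h2
  have h3 := congrFun h2 ⟨(x.1:ℕ), Nat.lt_succ_self _⟩
  simpa using h3

open Finset in
lemma mulVec_apply (v : BVertex b r → ℝ) (y : BVertex b r) :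
    (BAdjMatrix b r).mulVec v y =
      (if 0 < (y.1 : ℕ) then v (parentV y) else 0) +
      (if h : (y.1 : ℕ) < r then ∑ j : Fin (b (y.1 : ℕ)), v (childV y h j) else 0) := by
  classical
  have hsplit : ∀ x : BVertex b r,
      (BAdjMatrix b r) y x * v x =
        (if BExt x y then v x else 0) + (if BExt y x then v x else 0) := by
    intro x
    have hnot : ¬ (BExt y x ∧ BExt x y) := by
      rintro ⟨⟨h1, -⟩, ⟨h2, -⟩⟩; omega
    unfold BAdjMatrix BAdj
    by_cases h1 : BExt y x <;> by_cases h2 : BExt x y <;>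
      simp_all
  unfold Matrix.mulVec dotProduct
  simp only [hsplit, Finset.sum_add_distrib]
  congr 1
  · -- parent term
    by_cases h0 : 0 < (y.1 : ℕ)
    · rw [if_pos h0]
      have hco : ∀ x : BVertex b r, (if BExt x y then v x else 0)
          = if x = parentV y then v x else 0 := by
        intro x
        by_cases hb : BExt x y
        · rw [if_pos hb, if_pos (bext_iff_parent.mp hb).2]
        · rw [if_neg hb, if_neg (fun he => hb (bext_iff_parent.mpr ⟨h0, he⟩))]
      simp only [hco]
      exact (Finset.sum_ite_eq' Finset.univ (parentV y) v).trans (if_pos (Finset.mem_univ _))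
    · rw [if_neg h0]
      refine Finset.sum_eq_zero fun x _ => ?_
      rw [if_neg]
      rw [bext_iff_parent]
      rintro ⟨h', -⟩
      exact h0 h'
  · -- children sum
    by_cases h : (y.1 : ℕ) < r
    · rw [dif_pos h]
      have hiff : ∀ x : BVertex b r, BExt y x ↔ x ∈ Finset.image (childV y h) Finset.univ := by
        intro x
        rw [bext_iff_child]
        simp only [Finset.mem_image, Finset.mem_univ, true_and]
        constructor
        · rintro ⟨h', j, rfl⟩; exact ⟨j, rfl⟩
        · rintro ⟨j, rfl⟩; exact ⟨h, j, rfl⟩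
      calc (∑ x, if BExt y x then v x else 0)
          = ∑ x, if x ∈ Finset.image (childV y h) Finset.univ then v x else 0 := by
            exact Finset.sum_congr rfl fun x _ => by rw [if_congr (hiff x) rfl rfl]
        _ = ∑ x ∈ Finset.image (childV y h) Finset.univ, v x := by
            rw [Finset.sum_ite_mem, Finset.univ_inter]
        _ = ∑ j : Fin (b (y.1:ℕ)), v (childV y h j) := by
            rw [Finset.sum_image (fun a _ c _ hac => childV_injective y h hac)]
    · rw [dif_neg h]
      refine Finset.sum_eq_zero fun x _ => ?_
      rw [if_neg]
      rw [bext_iff_child]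
      rintro ⟨h', -⟩
      exact h h'

end HatAux

section Phi

/-- all `Rpoly` evaluations satisfy the recurrence -/
lemma Rpoly_eval_rec (k : ℕ) (lam : ℝ) (n : ℕ) :
    (Rpoly k (n+2)).eval lam
      = lam * (Rpoly k (n+1)).eval lam - ((k:ℝ)-1) * (Rpoly k n).eval lam := by
  simp [Rpoly]

lemma Rpoly_not_both_zero (k : ℕ) (hk : 3 ≤ k) (lam : ℝ) :
    ∀ n : ℕ, (Rpoly k n).eval lam = 0 → (Rpoly k (n+1)).eval lam = 0 → False := by
  intro n
  induction n with
  | zero => intro _ h1; simp [Rpoly] at h1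
  | succ m ih =>
    intro h1 h2
    have hrec := Rpoly_eval_rec k lam m
    rw [h1, h2] at hrec
    have hk1 : ((k:ℝ) - 1) ≠ 0 := by
      have : (3:ℝ) ≤ (k:ℝ) := by exact_mod_cast hk
      nlinarith
    rw [mul_zero, zero_sub] at hrec
    have h0 : ((k:ℝ)-1) * (Rpoly k m).eval lam = 0 := by linarith
    exact ih ((mul_eq_zero.mp h0).resolve_left hk1) h1

lemma hatB_pos_eq (k i : ℕ) (hi : 0 < i) : hatB k i = k - 1 := by
  simp [hatB, Nat.pos_iff_ne_zero.mp hi]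

/-- The candidate eigenvector associated to coefficients `ε`. -/
noncomputable def phiVec (k r s : ℕ) (lam : ℝ)
    (ε : (((i : Fin (r - s + 1)) → Fin (hatB k i)) × Fin (hatB k (r - s + 1))) → ℝ)
    (x : BVertex (hatB k) r) : ℝ :=
  if h : r - s + 1 < (x.1 : ℕ) then
    ε (fun i => x.2 ⟨i, by have : (i:ℕ) < r - s + 1 := i.isLt; omega⟩, x.2 ⟨r - s + 1, h⟩)
      * (Rpoly k (r + 1 - (x.1 : ℕ))).eval lam
  else 0

lemma phiVec_zero (k r s : ℕ) (lam : ℝ) (ε) (x : BVertex (hatB k) r)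
    (h : (x.1 : ℕ) ≤ r - s + 1) : phiVec k r s lam ε x = 0 :=
  dif_neg (by omega)

lemma phiVec_apply (k r s : ℕ) (lam : ℝ) (ε) (x : BVertex (hatB k) r)
    (h : r - s + 1 < (x.1 : ℕ)) :
    phiVec k r s lam ε x
      = ε (fun i => x.2 ⟨i, by have : (i:ℕ) < r - s + 1 := i.isLt; omega⟩,
            x.2 ⟨r - s + 1, h⟩) * (Rpoly k (r + 1 - (x.1 : ℕ))).eval lam :=
  dif_pos h

lemma phiVec_eigen (k r s : ℕ) (hk : 3 ≤ k) (hs2 : 2 ≤ s) (hsr : s ≤ r) (lam : ℝ)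
    (hroot : (Rpoly k s).eval lam = 0)
    (ε : (((i : Fin (r - s + 1)) → Fin (hatB k i)) × Fin (hatB k (r - s + 1))) → ℝ)
    (hε : ∀ c, ∑ d : Fin (hatB k (r - s + 1)), ε (c, d) = 0) :
    (BAdjMatrix (hatB k) r).mulVec (phiVec k r s lam ε) = lam • phiVec k r s lam ε := by
  funext y
  rw [mulVec_apply]
  simp only [Pi.smul_apply, smul_eq_mul]
  rcases Nat.lt_trichotomy (y.1 : ℕ) (r - s + 1) with hcase | hcase | hcase
  · -- depth < t : everything zero
    have hy0 : phiVec k r s lam ε y = 0 := phiVec_zero _ _ _ _ _ _ (by omega)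
    have hp : phiVec k r s lam ε (parentV y) = 0 :=
      phiVec_zero _ _ _ _ _ _ (by simp only [parentV_fst]; omega)
    have hch : ∀ (h : (y.1:ℕ) < r) (j : Fin (hatB k (y.1:ℕ))),
        phiVec k r s lam ε (childV y h j) = 0 :=
      fun h j => phiVec_zero _ _ _ _ _ _ (by simp only [childV_fst]; omega)
    rw [hy0, mul_zero, hp]
    split_ifs with h1 h2 h3 <;>
      simp_all [Finset.sum_eq_zero fun j _ => hch (by omega) j]
  · -- depth = t
    have hy0 : phiVec k r s lam ε y = 0 := phiVec_zero _ _ _ _ _ _ (by omega)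
    have hp : phiVec k r s lam ε (parentV y) = 0 :=
      phiVec_zero _ _ _ _ _ _ (by simp only [parentV_fst]; omega)
    have hmr : (y.1:ℕ) < r := by omega
    have ecast : hatB k (y.1:ℕ) = hatB k (r - s + 1) := by rw [hcase]
    have hcv : ∀ j : Fin (hatB k (y.1:ℕ)),
        phiVec k r s lam ε (childV y hmr j)
          = ε ((fun i => y.2 ⟨(i:ℕ), by have : (i:ℕ) < r - s + 1 := i.isLt; omega⟩),
              Fin.cast ecast j) * (Rpoly k (s - 1)).eval lam := by
      intro j
      rw [phiVec_apply _ _ _ _ _ _ (by simp only [childV_fst]; omega)]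
      rw [show r + 1 - (((childV y hmr j).1 : ℕ)) = s - 1 by simp only [childV_fst]; omega]
      refine congrArg (· * (Rpoly k (s - 1)).eval lam) (congrArg ε (Prod.ext ?_ ?_))
      · funext i
        exact childV_snd_lt y hmr j (i:ℕ) (by have : (i:ℕ) < r - s + 1 := i.isLt; omega)
          (by have : (i:ℕ) < r - s + 1 := i.isLt; omega)
      · show (childV y hmr j).2 ⟨r - s + 1, _⟩ = _
        simp only [childV]
        rw [dif_neg (by omega)]
    rw [hy0, mul_zero, hp, if_pos (by omega : 0 < (y.1:ℕ)), dif_pos hmr, zero_add]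
    simp only [hcv]
    rw [← Finset.sum_mul]
    rw [Fintype.sum_equiv (finCongr ecast)
      (fun j => ε (_, Fin.cast ecast j)) (fun d => ε (_, d)) (fun j => rfl)]
    rw [hε, zero_mul]
  · -- depth > t
    have h1 : 0 < (y.1:ℕ) := by omega
    rw [phiVec_apply _ _ _ _ _ y hcase, if_pos h1]
    set A := ε ((fun i => y.2 ⟨(i:ℕ), by have : (i:ℕ) < r - s + 1 := i.isLt; omega⟩),
      y.2 ⟨r - s + 1, hcase⟩) with hA
    have hpar : phiVec k r s lam ε (parentV y)
        = A * (Rpoly k (r + 2 - (y.1:ℕ))).eval lam := by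
      rcases eq_or_lt_of_le (show r - s + 2 ≤ (y.1:ℕ) by omega) with he | hlt
      · rw [phiVec_zero _ _ _ _ _ _ (by simp only [parentV_fst]; omega)]
        rw [show r + 2 - (y.1:ℕ) = s by omega, hroot, mul_zero]
      · rw [phiVec_apply _ _ _ _ _ _ (by simp only [parentV_fst]; omega)]
        rw [show r + 1 - (((parentV y).1 : ℕ)) = r + 2 - (y.1:ℕ) by
          simp only [parentV_fst]; omega]
        rfl
    have hch : ∀ (h : (y.1:ℕ) < r) (j : Fin (hatB k (y.1:ℕ))),
        phiVec k r s lam ε (childV y h j)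
          = A * (Rpoly k (r - (y.1:ℕ))).eval lam := by
      intro h j
      rw [phiVec_apply _ _ _ _ _ _ (by simp only [childV_fst]; omega)]
      rw [show r + 1 - (((childV y h j).1 : ℕ)) = r - (y.1:ℕ) by
        simp only [childV_fst]; omega]
      rw [hA]
      refine congrArg (· * (Rpoly k (r - (y.1:ℕ))).eval lam) (congrArg ε (Prod.ext ?_ ?_))
      · funext i
        exact childV_snd_lt y h j (i:ℕ) (by have : (i:ℕ) < r - s + 1 := i.isLt; omega)
          (by have : (i:ℕ) < r - s + 1 := i.isLt; omega)
      · exact childV_snd_lt y h j (r - s + 1) (by omega) (by omega)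
    have hchsum : (if h : (y.1:ℕ) < r then
        ∑ j : Fin (hatB k (y.1:ℕ)), phiVec k r s lam ε (childV y h j) else 0)
          = ((k:ℝ) - 1) * (A * (Rpoly k (r - (y.1:ℕ))).eval lam) := by
      by_cases h : (y.1:ℕ) < r
      · rw [dif_pos h]
        simp only [hch h]
        rw [Finset.sum_const, Finset.card_univ, Fintype.card_fin,
          hatB_pos_eq k _ (by omega), nsmul_eq_mul]
        congr 1
        have : (1:ℕ) ≤ k := by omega
        push_cast [Nat.cast_sub this]
        ring
      · rw [dif_neg h]
        rw [show r - (y.1:ℕ) = 0 by omega]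
        simp [Rpoly]
    rw [hpar, hchsum]
    have hrec := Rpoly_eval_rec k lam (r - (y.1:ℕ))
    rw [show r - (y.1:ℕ) + 2 = r + 2 - (y.1:ℕ) by omega,
      show r - (y.1:ℕ) + 1 = r + 1 - (y.1:ℕ) by omega] at hrec
    linear_combination A * hrec

/-- The vertex of depth `r-s+2` with prefix `c` and last letter `d`. -/
def vertCD (k r s : ℕ) (hs2 : 2 ≤ s) (hsr : s ≤ r)
    (c : (i : Fin (r - s + 1)) → Fin (hatB k i)) (d : Fin (hatB k (r - s + 1))) :
    BVertex (hatB k) r :=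
  ⟨⟨r - s + 2, by omega⟩, fun i =>
    if hi : (i : ℕ) < r - s + 1 then c ⟨i, hi⟩
    else Fin.cast (congrArg (hatB k)
      (by have : (i:ℕ) < r - s + 2 := i.isLt; omega : r - s + 1 = (i:ℕ))) d⟩

@[simp] lemma vertCD_fst (k r s : ℕ) (hs2 : 2 ≤ s) (hsr : s ≤ r) (c d) :
    (((vertCD k r s hs2 hsr c d).1 : ℕ)) = r - s + 2 := rfl

lemma phiVec_vertCD (k r s : ℕ) (hs2 : 2 ≤ s) (hsr : s ≤ r) (lam : ℝ) (ε) (c d) :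
    phiVec k r s lam ε (vertCD k r s hs2 hsr c d)
      = ε (c, d) * (Rpoly k (s - 1)).eval lam := by
  rw [phiVec_apply _ _ _ _ _ _ (by simp only [vertCD_fst]; omega)]
  rw [show r + 1 - (((vertCD k r s hs2 hsr c d).1 : ℕ)) = s - 1 by
    simp only [vertCD_fst]; omega]
  refine congrArg (· * (Rpoly k (s - 1)).eval lam) (congrArg ε (Prod.ext ?_ ?_))
  · funext i
    show (vertCD k r s hs2 hsr c d).2 ⟨(i:ℕ), _⟩ = c i
    simp only [vertCD]
    rw [dif_pos i.isLt]
  · show (vertCD k r s hs2 hsr c d).2 ⟨r - s + 1, _⟩ = d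
    simp only [vertCD]
    rw [dif_neg (by omega)]
    rfl

/-- `phiVec` as a linear map. -/
noncomputable def phiL (k r s : ℕ) (lam : ℝ) :
    ((((i : Fin (r - s + 1)) → Fin (hatB k i)) × Fin (hatB k (r - s + 1))) → ℝ) →ₗ[ℝ]
      (BVertex (hatB k) r → ℝ) where
  toFun ε := phiVec k r s lam ε
  map_add' ε1 ε2 := by
    funext x
    simp only [phiVec, Pi.add_apply]
    split_ifs with h <;> simp [add_mul]
  map_smul' a ε := by
    funext x
    simp only [phiVec, Pi.smul_apply, smul_eq_mul, RingHom.id_apply]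
    split_ifs with h <;> simp [mul_assoc]

lemma phiL_inj (k r s : ℕ) (hs2 : 2 ≤ s) (hsr : s ≤ r) (lam : ℝ)
    (hR : (Rpoly k (s - 1)).eval lam ≠ 0) :
    Function.Injective (phiL k r s lam) := by
  rw [← LinearMap.ker_eq_bot]
  rw [Submodule.eq_bot_iff]
  intro ε hε
  rw [LinearMap.mem_ker] at hε
  funext p
  obtain ⟨c, d⟩ := p
  have h0 := congrFun hε (vertCD k r s hs2 hsr c d)
  rw [show (phiL k r s lam ε) (vertCD k r s hs2 hsr c d)
    = phiVec k r s lam ε (vertCD k r s hs2 hsr c d) from rfl,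
    phiVec_vertCD] at h0
  have := mul_eq_zero.mp h0
  simpa [hR] using this

/-- The row-sums linear map. -/
noncomputable def sumL (k r s : ℕ) :
    ((((i : Fin (r - s + 1)) → Fin (hatB k i)) × Fin (hatB k (r - s + 1))) → ℝ) →ₗ[ℝ]
      (((i : Fin (r - s + 1)) → Fin (hatB k i)) → ℝ) where
  toFun ε := fun c => ∑ d : Fin (hatB k (r - s + 1)), ε (c, d)
  map_add' ε1 ε2 := by funext c; simp [Finset.sum_add_distrib]
  map_smul' a ε := by funext c; simp [Finset.mul_sum]

lemma sumL_surj (k r s : ℕ) (hk : 3 ≤ k) :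
    Function.Surjective (sumL k r s) := by
  intro g
  have hpos : 0 < hatB k (r - s + 1) := by unfold hatB; split <;> omega
  refine ⟨fun p => if p.2 = ⟨0, hpos⟩ then g p.1 else 0, ?_⟩
  funext c
  show (∑ d : Fin (hatB k (r - s + 1)), if d = ⟨0, hpos⟩ then g c else 0) = g c
  rw [Finset.sum_ite_eq' Finset.univ (⟨0, hpos⟩ : Fin (hatB k (r - s + 1)))
    (fun _ => g c)]
  simp

lemma card_prefix (k r s : ℕ) (hsr : s ≤ r) :
    Fintype.card ((i : Fin (r - s + 1)) → Fin (hatB k (i : ℕ))) = k * (k - 1) ^ (r - s) := by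
  rw [Fintype.card_pi]
  simp only [Fintype.card_fin]
  rw [Fin.prod_univ_succ]
  have h1 : ∀ i : Fin (r - s), hatB k ((Fin.succ i : Fin (r - s + 1)) : ℕ) = k - 1 :=
    fun i => hatB_pos_eq k _ (by simp)
  rw [Finset.prod_congr rfl (fun i _ => h1 i), Finset.prod_const, Finset.card_univ,
    Fintype.card_fin]
  rfl

end Phi

/-- Let `k ≥ 3`, `r ≥ 2`, `2 ≤ s ≤ r`, and let `lam` be a root of
`R^k_s`. Then `lam` is an eigenvalue of the adjacency matrix of `\\widehat{X_r^k}` and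
the `lam`-eigenspace has dimension at least `(k−2)·k·(k−1)^{r−s}`. -/
theorem hat_eigenspace_of_root_Rs (k r s : ℕ) (hk : 3 ≤ k) (hr : 2 ≤ r)
    (hs2 : 2 ≤ s) (hsr : s ≤ r) (lam : ℝ) (hroot : (Rpoly k s).IsRoot lam) :
    IsAdjEigenvalue (hatB k) r lam ∧
      (k - 2) * k * (k - 1) ^ (r - s) ≤ adjEigDim (hatB k) r lam := by
  classical
  have hroot' : (Rpoly k s).eval lam = 0 := hroot
  have hR : (Rpoly k (s - 1)).eval lam ≠ 0 := by
    intro h0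
    refine Rpoly_not_both_zero k hk lam (s - 1) h0 ?_
    rw [show s - 1 + 1 = s by omega]
    exact hroot'
  have hpos : 0 < hatB k (r - s + 1) := by unfold hatB; split <;> omega
  have hcard : hatB k (r - s + 1) = k - 1 := hatB_pos_eq k _ (by omega)
  have h1lt : 1 < hatB k (r - s + 1) := by omega
  set d0 : Fin (hatB k (r - s + 1)) := ⟨0, hpos⟩ with hd0
  set d1 : Fin (hatB k (r - s + 1)) := ⟨1, h1lt⟩ with hd1
  have hcpos : ∀ i : ℕ, 0 < hatB k i := by intro i; unfold hatB; split <;> omega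
  set c0 : (i : Fin (r - s + 1)) → Fin (hatB k i) := fun i => ⟨0, hcpos i⟩ with hc0
  set ε0 : (((i : Fin (r - s + 1)) → Fin (hatB k i)) × Fin (hatB k (r - s + 1))) → ℝ :=
    fun p => (if p.1 = c0 then (1:ℝ) else 0) *
      ((if p.2 = d0 then (1:ℝ) else 0) - (if p.2 = d1 then (1:ℝ) else 0)) with hε0
  have hsum0 : ∀ c, ∑ d : Fin (hatB k (r - s + 1)), ε0 (c, d) = 0 := by
    intro c
    calc ∑ d : Fin (hatB k (r - s + 1)), ε0 (c, d)
        = ∑ d : Fin (hatB k (r - s + 1)), (if c = c0 then (1:ℝ) else 0) *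
            ((if d = d0 then (1:ℝ) else 0) - (if d = d1 then (1:ℝ) else 0)) := rfl
      _ = 0 := by
          rw [← Finset.mul_sum, Finset.sum_sub_distrib,
            Finset.sum_ite_eq' Finset.univ d0 (fun _ => (1:ℝ)),
            Finset.sum_ite_eq' Finset.univ d1 (fun _ => (1:ℝ))]
          simp
  constructor
  · refine ⟨phiVec k r s lam ε0, ?_, phiVec_eigen k r s hk hs2 hsr lam hroot' ε0 hsum0⟩
    intro hzero
    have h0 : phiVec k r s lam ε0 (vertCD k r s hs2 hsr c0 d0) = 0 := by rw [hzero]; rfl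
    rw [phiVec_vertCD] at h0
    have hne : d0 ≠ d1 := by
      rw [hd0, hd1]
      intro hcon
      have := congrArg Fin.val hcon
      simp at this
    have hε00 : ε0 (c0, d0) = 1 := by
      rw [hε0]
      simp only [if_pos rfl, if_neg hne]
      norm_num
    rw [hε00, one_mul] at h0
    exact hR h0
  · have hle : Submodule.map (phiL k r s lam) (LinearMap.ker (sumL k r s)) ≤
        LinearMap.ker ((BAdjMatrix (hatB k) r).mulVecLin - lam • LinearMap.id) := by
      rintro v hv
      obtain ⟨ε, hεker, rfl⟩ := Submodule.mem_map.mp hv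
      rw [LinearMap.mem_ker] at hεker ⊢
      have hsum : ∀ c, ∑ d : Fin (hatB k (r - s + 1)), ε (c, d) = 0 :=
        fun c => congrFun hεker c
      have heig := phiVec_eigen k r s hk hs2 hsr lam hroot' ε hsum
      rw [LinearMap.sub_apply, LinearMap.smul_apply, LinearMap.id_apply,
        Matrix.mulVecLin_apply]
      rw [show (phiL k r s lam) ε = phiVec k r s lam ε from rfl, heig]
      exact sub_self _
    have hinj := phiL_inj k r s hs2 hsr lam hR
    have heq : Module.finrank ℝ (LinearMap.ker (sumL k r s)) =
        Module.finrank ℝ (Submodule.map (phiL k r s lam) (LinearMap.ker (sumL k r s))) :=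
      LinearEquiv.finrank_eq (Submodule.equivMapOfInjective _ hinj _)
    have hmono := Submodule.finrank_mono hle
    have hrn := LinearMap.finrank_range_add_finrank_ker (sumL k r s)
    rw [LinearMap.range_eq_top.mpr (sumL_surj k r s hk), finrank_top,
      Module.finrank_fintype_fun_eq_card, Module.finrank_fintype_fun_eq_card,
      Fintype.card_prod, Fintype.card_fin, card_prefix k r s hsr] at hrn
    have hrn2 : k * (k - 1) ^ (r - s) + Module.finrank ℝ (LinearMap.ker (sumL k r s))
        = k * (k - 1) ^ (r - s) * (k - 1) := hrn.trans (by rw [hcard])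
    have hx : Module.finrank ℝ (LinearMap.ker (sumL k r s))
        = k * (k - 1) ^ (r - s) * (k - 2) := by
      have h2 : (k * (k - 1) ^ (r - s)) * (k - 1)
          = k * (k - 1) ^ (r - s) + k * (k - 1) ^ (r - s) * (k - 2) := by
        have e1 : k - 1 = (k - 2) + 1 := by omega
        rw [e1, Nat.mul_succ]
        ring
      have h3 : k * (k - 1) ^ (r - s) + Module.finrank ℝ (LinearMap.ker (sumL k r s))
          = k * (k - 1) ^ (r - s) + k * (k - 1) ^ (r - s) * (k - 2) := by
        rw [hrn2, h2]
      exact Nat.add_left_cancel h3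
    calc (k - 2) * k * (k - 1) ^ (r - s) = k * (k - 1) ^ (r - s) * (k - 2) := by ring
      _ = Module.finrank ℝ (LinearMap.ker (sumL k r s)) := hx.symm
      _ = Module.finrank ℝ
            (Submodule.map (phiL k r s lam) (LinearMap.ker (sumL k r s))) := heq
      _ ≤ adjEigDim (hatB k) r lam := hmono
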